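/- Let p > 1, R > 1, T > 0, and let a, b ∈ ℝ satisfy one of: (a+b > 0 and a > 0); (a+b = 0 and a > 0); (a = 0 and b ≥ 0); (a < 0); (a+b < 0 and b < 0). Define E₁(T) := 1 if a+b > 0 and a > 0; log(T+3R) if (a+b = 0 and a > 0) or (a = 0 and b > 0); log²(T+3R) if a = b = 0; (T+2R)^{−a} if a < 0 and b > 0; (T+R)^{−a} log(T+3R) if a < 0 and b = 0; (T+2R)^{−(a+b)} if a+b < 0 and b < 0. Let L(V)(x,t) := (1/2)∫₀^t ∫_{x−t+s}^{x+t−s} V(y,s) ⟨s+⟨y⟩⟩^{−(1+a)} ⟨s−⟨y⟩⟩^{−(1+b)} dy ds, and ‖u‖₁ := sup_{(x,t)∈ℝ×[0,T]}|u(x,t)|. Then there exists a constant C₁ = C₁(p,a,b,R) > 0 such that for every u ∈ C(ℝ×[0,T]) with supp u ⊂ {|x| ≤ t+R}, one has ‖L(|u|^p)‖₁ ≤ C₁ ‖u‖₁^p E₁(T). -/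

import Mathlib

open Real MeasureTheory Set
open scoped Classical

noncomputable section

/-- The Japanese bracket `⟨x⟩ = (1+x²)^{1/2}`. -/
def jap (x : ℝ) : ℝ := Real.sqrt (1 + x ^ 2)

/-- The characteristic weight `F(x,t) = ⟨t+⟨x⟩⟩^{-(1+a)} ⟨t-⟨x⟩⟩^{-(1+b)}`. -/
def cweight (a b x t : ℝ) : ℝ :=
  jap (t + jap x) ^ (-(1 + a)) * jap (t - jap x) ^ (-(1 + b))

/-- The Duhamel integral operator with the characteristic weight. -/
def duhamel (a b : ℝ) (V : ℝ → ℝ → ℝ) (x t : ℝ) : ℝ :=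
  (∫ s in (0:ℝ)..t, ∫ y in (x - t + s)..(x + t - s), V y s * cweight a b y s) / 2

/-- The quantity `E₁(T)` from Lemma 3.1. -/
def E1 (a b R T : ℝ) : ℝ :=
  if 0 < a + b ∧ 0 < a then 1
  else if (a + b = 0 ∧ 0 < a) ∨ (a = 0 ∧ 0 < b) then Real.log (T + 3 * R)
  else if a = 0 ∧ b = 0 then Real.log (T + 3 * R) ^ 2
  else if a < 0 ∧ 0 < b then (T + 2 * R) ^ (-a)
  else if a < 0 ∧ b = 0 then (T + R) ^ (-a) * Real.log (T + 3 * R)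
  else (T + 2 * R) ^ (-(a + b))

/-! ### Auxiliary lemmas -/

lemma jap_pos (x : ℝ) : 0 < jap x := Real.sqrt_pos.mpr (by positivity)

lemma one_le_jap (x : ℝ) : 1 ≤ jap x := by
  rw [jap]
  have := Real.sq_sqrt (show (0:ℝ) ≤ 1 + x ^ 2 by positivity)
  nlinarith [Real.sqrt_nonneg (1 + x ^ 2), sq_nonneg x,
    sq_nonneg (Real.sqrt (1 + x ^ 2) - 1)]

lemma abs_le_jap (x : ℝ) : |x| ≤ jap x := by
  rw [jap, ← Real.sqrt_sq_eq_abs]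
  exact Real.sqrt_le_sqrt (by nlinarith)

lemma self_le_jap (x : ℝ) : x ≤ jap x := (le_abs_self x).trans (abs_le_jap x)

lemma jap_le (x : ℝ) : jap x ≤ 1 + |x| := by
  rw [jap]
  rw [show x ^ 2 = |x| ^ 2 by rw [sq_abs]]
  nlinarith [Real.sq_sqrt (show (0:ℝ) ≤ 1 + |x|^2 by positivity),
    Real.sqrt_nonneg (1 + |x|^2), abs_nonneg x,
    sq_nonneg (Real.sqrt (1 + |x|^2) - (1 + |x|))]

lemma rpow_comparable {A B c q : ℝ} (hB : 0 < B) (hc : 0 < c) (h1 : B ≤ c * A) (h2 : A ≤ c * B) :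
    A ^ q ≤ c ^ |q| * B ^ q := by
  have hA : 0 < A := by
    rcases mul_pos_iff.mp (hB.trans_le h1) with ⟨_, h⟩ | ⟨h, _⟩
    · exact h
    · linarith
  have hc1 : 1 ≤ c := by nlinarith
  rcases le_or_gt 0 q with hq | hq
  · rw [abs_of_nonneg hq, ← Real.mul_rpow hc.le hB.le]
    exact Real.rpow_le_rpow hA.le h2 hq
  · rw [abs_of_neg hq]
    have h3 : B / c ≤ A := (div_le_iff₀ hc).mpr (by nlinarith)
    calc A ^ q ≤ (B / c) ^ q := Real.rpow_le_rpow_of_nonpos (by positivity) h3 hq.le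
      _ = c ^ (-q) * B ^ q := by
          rw [Real.div_rpow hB.le hc.le, Real.rpow_neg hc.le]
          field_simp

lemma cweight_nonneg (a b y s : ℝ) : 0 ≤ cweight a b y s :=
  mul_nonneg (Real.rpow_nonneg (jap_pos _).le _) (Real.rpow_nonneg (jap_pos _).le _)

lemma cweight_le {a b R y s : ℝ} (hR : 1 < R) (hs : 0 ≤ s) (hy : |y| ≤ s + R) :
    cweight a b y s ≤
      ((2+R) ^ |1+a| * (1+s) ^ (-(1+a))) * (3 ^ |1+b| * (1+(abs (s - |y|))) ^ (-(1+b))) := by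
  have hsj : 0 ≤ s + jap y := by nlinarith [jap_pos y]
  have hF1 : jap (s + jap y) ^ (-(1+a)) ≤ (2+R) ^ |1+a| * (1+s) ^ (-(1+a)) := by
    have h := rpow_comparable (A := jap (s + jap y)) (B := 1+s) (c := 2+R) (q := -(1+a))
      (by linarith) (by linarith)
      (by nlinarith [self_le_jap (s + jap y), one_le_jap y, jap_pos (s + jap y)])
      (by nlinarith [jap_le (s + jap y), abs_of_nonneg hsj, jap_le y, abs_le_jap y])
    rwa [abs_neg] at h
  have hd : abs (s - |y|) ≤ |s - jap y| + 1 := by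
    have h1 := abs_sub_abs_le_abs_sub (s - |y|) (s - jap y)
    have h2 : |s - |y| - (s - jap y)| = jap y - |y| := by
      rw [show s - |y| - (s - jap y) = jap y - |y| by ring,
        abs_of_nonneg (by linarith [abs_le_jap y])]
    nlinarith [abs_nonneg (s - jap y), jap_le y]
  have hd' : |s - jap y| ≤ abs (s - |y|) + 1 := by
    have h1 := abs_sub_abs_le_abs_sub (s - jap y) (s - |y|)
    have h2 : |s - jap y - (s - |y|)| = jap y - |y| := by
      rw [show s - jap y - (s - |y|) = -(jap y - |y|) by ring, abs_neg,
        abs_of_nonneg (by linarith [abs_le_jap y])]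
    nlinarith [abs_nonneg (s - |y|), jap_le y]
  have hF2 : jap (s - jap y) ^ (-(1+b)) ≤ 3 ^ |1+b| * (1+(abs (s - |y|))) ^ (-(1+b)) := by
    have h := rpow_comparable (A := jap (s - jap y)) (B := 1+(abs (s - |y|))) (c := 3)
      (q := -(1+b))
      (by positivity) (by norm_num)
      (by nlinarith [abs_le_jap (s - jap y), one_le_jap (s - jap y)])
      (by nlinarith [jap_le (s - jap y), abs_nonneg (s - |y|)])
    rwa [abs_neg] at h
  exact mul_le_mul hF1 hF2 (Real.rpow_nonneg (jap_pos _).le _) (by positivity)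

lemma cont_aux {f : ℝ → ℝ} (hf : Continuous f) (e : ℝ) :
    Continuous fun w => (1 + |f w|) ^ e :=
  continuous_iff_continuousAt.mpr fun w =>
    ContinuousAt.rpow_const (by fun_prop) (Or.inl (by positivity))

lemma cont_aux2 {t : ℝ} (e : ℝ) : ContinuousOn (fun s : ℝ => (1+s) ^ e) (Icc 0 t) := by
  intro s hs
  exact (ContinuousAt.rpow_const (by fun_prop) (Or.inl (by nlinarith [hs.1]))).continuousWithinAt

lemma int_shift (e r : ℝ) : ∫ z in (0:ℝ)..r, (1+z) ^ e = ∫ x in (1:ℝ)..(1+r), x ^ e := by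
  have := intervalIntegral.integral_comp_add_left (a := (0:ℝ)) (b := r) (fun x => x ^ e) 1
  simpa using this

lemma int_pow_eval {q r : ℝ} (hq : q ≠ 0) (hr : 0 ≤ r) :
    ∫ z in (0:ℝ)..r, (1+z) ^ (-(1+q)) = (1 - (1+r) ^ (-q)) / q := by
  rw [int_shift]
  rw [integral_rpow (Or.inr ⟨by intro h; apply hq; linarith [neg_eq_iff_eq_neg.mp h],
    by rw [Set.uIcc_of_le (by linarith)]; rintro ⟨h0, _⟩; linarith⟩)]
  rw [show -(1+q)+1 = -q by ring, Real.one_rpow, div_neg, ← neg_div, neg_sub]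

lemma int_inv_eval {r : ℝ} (hr : 0 ≤ r) :
    ∫ z in (0:ℝ)..r, (1+z) ^ (-1:ℝ) = Real.log (1+r) := by
  rw [int_shift]
  rw [intervalIntegral.integral_congr (g := fun x => x⁻¹)
    (fun x hx => by rw [Real.rpow_neg_one])]
  rw [integral_inv (by rw [Set.uIcc_of_le (by linarith)]; rintro ⟨h0, _⟩; linarith)]
  rw [div_one]

lemma int_nonneg {e r : ℝ} (hr : 0 ≤ r) : 0 ≤ ∫ z in (0:ℝ)..r, (1+z) ^ e :=
  intervalIntegral.integral_nonneg hr (fun z hz => Real.rpow_nonneg (by linarith [hz.1]) _)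

lemma int_bound_pos {q r : ℝ} (hq : 0 < q) (hr : 0 ≤ r) :
    ∫ z in (0:ℝ)..r, (1+z) ^ (-(1+q)) ≤ 1 / q := by
  rw [int_pow_eval hq.ne' hr]
  have : 0 ≤ (1+r) ^ (-q) := Real.rpow_nonneg (by linarith) _
  rw [div_le_div_iff₀ hq hq]
  nlinarith

lemma int_bound_neg {q r : ℝ} (hq : q < 0) (hr : 0 ≤ r) :
    ∫ z in (0:ℝ)..r, (1+z) ^ (-(1+q)) ≤ (1+r) ^ (-q) / (-q) := by
  rw [int_pow_eval hq.ne hr]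
  have hA : 0 ≤ (1+r) ^ (-q) := Real.rpow_nonneg (by linarith) _
  rw [show (1 - (1+r) ^ (-q)) / q = ((1+r) ^ (-q) - 1) / (-q) by
    rw [div_neg, ← neg_div, neg_sub]]
  have hq' : (0:ℝ) < -q := by linarith
  gcongr
  linarith

lemma sym_integral (b s R : ℝ) (hs : 0 ≤ s) (hR : 0 < R) :
    ∫ y in (-(s+R))..(s+R), (1 + (abs (s - |y|))) ^ (-(1+b)) =
      2 * ((∫ z in (0:ℝ)..s, (1+z) ^ (-(1+b))) + ∫ z in (0:ℝ)..R, (1+z) ^ (-(1+b))) := by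
  set e := -(1+b) with he
  set φ : ℝ → ℝ := fun y => (1 + (abs (s - |y|))) ^ e with hφ
  set g : ℝ → ℝ := fun w => (1 + |w|) ^ e with hg
  have hφc : Continuous φ := cont_aux (by fun_prop) e
  have hgc : Continuous g := cont_aux (by fun_prop) e
  have hr : (0:ℝ) ≤ s + R := by linarith
  have hneg : ∀ c : ℝ, 0 ≤ c → ∫ y in (-c)..(0:ℝ), φ y = ∫ y in (0:ℝ)..c, φ y := by
    intro c hc
    calc ∫ y in (-c)..(0:ℝ), φ y = ∫ y in (-c)..(-0:ℝ), φ y := by norm_num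
      _ = ∫ y in (0:ℝ)..c, φ (-y) := (intervalIntegral.integral_comp_neg φ).symm
      _ = ∫ y in (0:ℝ)..c, φ y :=
          intervalIntegral.integral_congr (fun y hy => by simp [hφ, abs_neg])
  have hnegg : ∀ c : ℝ, 0 ≤ c → ∫ y in (-c)..(0:ℝ), g y = ∫ y in (0:ℝ)..c, g y := by
    intro c hc
    calc ∫ y in (-c)..(0:ℝ), g y = ∫ y in (-c)..(-0:ℝ), g y := by norm_num
      _ = ∫ y in (0:ℝ)..c, g (-y) := (intervalIntegral.integral_comp_neg g).symm
      _ = ∫ y in (0:ℝ)..c, g y :=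
          intervalIntegral.integral_congr (fun y hy => by simp [hg, abs_neg])
  have hsplit : ∫ y in (-(s+R))..(s+R), φ y
      = (∫ y in (-(s+R))..(0:ℝ), φ y) + ∫ y in (0:ℝ)..(s+R), φ y :=
    (intervalIntegral.integral_add_adjacent_intervals
      (hφc.intervalIntegrable _ _) (hφc.intervalIntegrable _ _)).symm
  have hmain : ∫ y in (0:ℝ)..(s+R), φ y
      = (∫ z in (0:ℝ)..s, (1+z) ^ e) + ∫ z in (0:ℝ)..R, (1+z) ^ e := by
    have e1 : ∫ y in (0:ℝ)..(s+R), φ y = ∫ y in (0:ℝ)..(s+R), g (y - s) := by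
      apply intervalIntegral.integral_congr
      intro y hy
      rw [Set.uIcc_of_le hr] at hy
      simp only [hφ, hg, abs_of_nonneg hy.1, abs_sub_comm s y]
    have e2 : ∫ y in (0:ℝ)..(s+R), g (y - s) = ∫ w in (-s)..R, g w := by
      rw [intervalIntegral.integral_comp_sub_right g s,
        show (0:ℝ) - s = -s by ring, show s + R - s = R by ring]
    have e3 : ∫ w in (-s)..R, g w = (∫ w in (-s)..(0:ℝ), g w) + ∫ w in (0:ℝ)..R, g w :=
      (intervalIntegral.integral_add_adjacent_intervals
        (hgc.intervalIntegrable _ _) (hgc.intervalIntegrable _ _)).symm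
    have e4 : ∫ w in (0:ℝ)..s, g w = ∫ z in (0:ℝ)..s, (1+z) ^ e := by
      apply intervalIntegral.integral_congr
      intro w hw
      rw [Set.uIcc_of_le hs] at hw
      simp only [hg, abs_of_nonneg hw.1]
    have e5 : ∫ w in (0:ℝ)..R, g w = ∫ z in (0:ℝ)..R, (1+z) ^ e := by
      apply intervalIntegral.integral_congr
      intro w hw
      rw [Set.uIcc_of_le hR.le] at hw
      simp only [hg, abs_of_nonneg hw.1]
    rw [e1, e2, e3, hnegg s hs, e4, e5]
  rw [hsplit, hneg (s+R) hr, hmain]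
  ring

lemma key (p a b R T : ℝ) (hp : 0 < p) (hR : 1 < R)
    (u : ℝ → ℝ → ℝ)
    (hsupp : ∀ x t : ℝ, 0 ≤ t → t ≤ T → t + R < |x| → u x t = 0)
    (M : ℝ) (hM : 0 ≤ M) (hMb : ∀ x t : ℝ, 0 ≤ t → t ≤ T → |u x t| ≤ M)
    (x t : ℝ) (ht0 : 0 ≤ t) (htT : t ≤ T)
    (ψ : ℝ → ℝ) (hψc : ContinuousOn ψ (Icc 0 t)) (hψ0 : ∀ s ∈ Icc (0:ℝ) t, 0 ≤ ψ s)
    (hψ : ∀ s ∈ Icc (0:ℝ) t, (1+s) ^ (-(1+a)) *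
      ((∫ z in (0:ℝ)..s, (1+z) ^ (-(1+b))) + ∫ z in (0:ℝ)..R, (1+z) ^ (-(1+b))) ≤ ψ s) :
    |duhamel a b (fun y s => |u y s| ^ p) x t| ≤
      ((2+R) ^ |1+a| * 3 ^ |1+b|) * M ^ p * ∫ s in (0:ℝ)..t, ψ s := by
  set K : ℝ := (2+R) ^ |1+a| * 3 ^ |1+b| with hKdef
  have hK : 0 < K := by
    apply mul_pos <;> exact Real.rpow_pos_of_pos (by norm_num <;> linarith) _
  set G : ℝ → ℝ := fun s => 2 * K * M ^ p * ψ s with hG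
  have hGI : IntervalIntegrable G volume 0 t := by
    apply ContinuousOn.intervalIntegrable
    rw [Set.uIcc_of_le ht0]
    exact (continuousOn_const.mul hψc)
  have hinner : ∀ s ∈ Set.Ioc (0:ℝ) t,
      ‖∫ y in (x - t + s)..(x + t - s), |u y s| ^ p * cweight a b y s‖ ≤ G s := by
    intro s hs
    obtain ⟨hs0, hst⟩ := hs
    have hsT : s ≤ T := hst.trans htT
    have hcd : x - t + s ≤ x + t - s := by linarith
    set J : Set ℝ := Icc (-(s+R)) (s+R) with hJ
    set h : ℝ → ℝ := fun y => (K * M ^ p * (1+s) ^ (-(1+a))) * (1+(abs (s - |y|))) ^ (-(1+b))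
      with hh
    have hhc : Continuous h := continuous_const.mul (cont_aux (by fun_prop) _)
    have hh0 : ∀ y, 0 ≤ h y := by
      intro y
      have h1 : (0:ℝ) ≤ (1+s) ^ (-(1+a)) := Real.rpow_nonneg (by linarith) _
      have h2 : (0:ℝ) ≤ (1+(abs (s - |y|))) ^ (-(1+b)) := Real.rpow_nonneg (by positivity) _
      have h3 : (0:ℝ) ≤ M ^ p := Real.rpow_nonneg hM _
      rw [hh]
      positivity
    set ht' : ℝ → ℝ := J.indicator h with hht'
    have hbd : ∀ y : ℝ, ‖|u y s| ^ p * cweight a b y s‖ ≤ ht' y := by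
      intro y
      by_cases hyJ : y ∈ J
      · rw [hht', Set.indicator_of_mem hyJ]
        have hy : |y| ≤ s + R := abs_le.mpr ⟨(Set.mem_Icc.mp hyJ).1, (Set.mem_Icc.mp hyJ).2⟩
        have hV : |u y s| ^ p ≤ M ^ p :=
          Real.rpow_le_rpow (abs_nonneg _) (hMb y s hs0.le hsT) hp.le
        have hcw := cweight_le (a := a) (b := b) hR hs0.le hy
        rw [Real.norm_eq_abs, abs_of_nonneg (mul_nonneg (Real.rpow_nonneg (abs_nonneg _) _)
          (cweight_nonneg a b y s))]
        calc |u y s| ^ p * cweight a b y s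
            ≤ M ^ p * (((2+R) ^ |1+a| * (1+s) ^ (-(1+a))) *
              (3 ^ |1+b| * (1+(abs (s - |y|))) ^ (-(1+b)))) :=
              mul_le_mul hV hcw (cweight_nonneg a b y s) (Real.rpow_nonneg hM _)
          _ = h y := by rw [hh, hKdef]; ring
      · rw [hht', Set.indicator_of_notMem hyJ]
        have hy : s + R < |y| := by
          by_contra hle
          exact hyJ (Set.mem_Icc.mpr (abs_le.mp (not_lt.mp hle)))
        rw [hsupp y s hs0.le hsT hy]
        simp [Real.zero_rpow hp.ne']
    have hIht' : IntervalIntegrable ht' volume (x - t + s) (x + t - s) := by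
      apply MeasureTheory.Integrable.intervalIntegrable
      rw [hht', MeasureTheory.integrable_indicator_iff measurableSet_Icc]
      exact hhc.integrableOn_Icc
    have step1 : ‖∫ y in (x - t + s)..(x + t - s), |u y s| ^ p * cweight a b y s‖ ≤
        |∫ y in (x - t + s)..(x + t - s), ht' y| :=
      intervalIntegral.norm_integral_le_abs_of_norm_le (Filter.Eventually.of_forall hbd) hIht'
    have step2 : |∫ y in (x - t + s)..(x + t - s), ht' y| =
        ∫ y in (x - t + s)..(x + t - s), ht' y :=
      abs_of_nonneg (intervalIntegral.integral_nonneg hcd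
        (fun y _ => Set.indicator_nonneg (fun y _ => hh0 y) y))
    have step3 : ∫ y in (x - t + s)..(x + t - s), ht' y ≤ ∫ y in J, h y := by
      rw [intervalIntegral.integral_of_le hcd, hht',
        MeasureTheory.setIntegral_indicator measurableSet_Icc]
      exact MeasureTheory.setIntegral_mono_set (hhc.integrableOn_Icc)
        (Filter.Eventually.of_forall hh0)
        (HasSubset.Subset.eventuallyLE Set.inter_subset_right)
    have step4 : ∫ y in J, h y = 2 * K * M ^ p * ((1+s) ^ (-(1+a)) *
        ((∫ z in (0:ℝ)..s, (1+z) ^ (-(1+b))) + ∫ z in (0:ℝ)..R, (1+z) ^ (-(1+b)))) := by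
      rw [hJ, MeasureTheory.integral_Icc_eq_integral_Ioc,
        ← intervalIntegral.integral_of_le (by linarith : -(s+R) ≤ s+R)]
      rw [hh, intervalIntegral.integral_const_mul, sym_integral b s R hs0.le (by linarith)]
      ring
    have step5 : 2 * K * M ^ p * ((1+s) ^ (-(1+a)) *
        ((∫ z in (0:ℝ)..s, (1+z) ^ (-(1+b))) + ∫ z in (0:ℝ)..R, (1+z) ^ (-(1+b)))) ≤ G s := by
      rw [hG]
      have h1 := hψ s ⟨hs0.le, hst⟩
      have h3 : (0:ℝ) ≤ M ^ p := Real.rpow_nonneg hM _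
      have h2 : (0:ℝ) ≤ 2 * K * M ^ p := by positivity
      exact mul_le_mul_of_nonneg_left h1 h2
    calc ‖∫ y in (x - t + s)..(x + t - s), |u y s| ^ p * cweight a b y s‖
        ≤ |∫ y in (x - t + s)..(x + t - s), ht' y| := step1
      _ = ∫ y in (x - t + s)..(x + t - s), ht' y := step2
      _ ≤ ∫ y in J, h y := step3
      _ = _ := step4
      _ ≤ G s := step5
  have houter : ‖∫ s in (0:ℝ)..t, ∫ y in (x - t + s)..(x + t - s),
      |u y s| ^ p * cweight a b y s‖ ≤ |∫ s in (0:ℝ)..t, G s| := by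
    apply intervalIntegral.norm_integral_le_abs_of_norm_le ?_ hGI
    apply MeasureTheory.ae_restrict_of_forall_mem measurableSet_uIoc
    intro s hs
    rw [Set.uIoc_of_le ht0] at hs
    exact hinner s hs
  have hGval : ∫ s in (0:ℝ)..t, G s = 2 * K * M ^ p * ∫ s in (0:ℝ)..t, ψ s := by
    rw [hG]; exact intervalIntegral.integral_const_mul _ _
  have hψI : 0 ≤ ∫ s in (0:ℝ)..t, ψ s :=
    intervalIntegral.integral_nonneg ht0 hψ0
  have h3 : (0:ℝ) ≤ M ^ p := Real.rpow_nonneg hM _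
  rw [duhamel, abs_div]
  rw [show |(2:ℝ)| = 2 by norm_num]
  rw [div_le_iff₀ (by norm_num : (0:ℝ) < 2)]
  calc |∫ s in (0:ℝ)..t, ∫ y in (x - t + s)..(x + t - s), |u y s| ^ p * cweight a b y s|
      ≤ |∫ s in (0:ℝ)..t, G s| := houter
    _ = 2 * K * M ^ p * ∫ s in (0:ℝ)..t, ψ s := by
        rw [hGval, abs_of_nonneg (by positivity)]
    _ = K * M ^ p * (∫ s in (0:ℝ)..t, ψ s) * 2 := by ring

lemma E1_case1 {a b R T : ℝ} (h1 : 0 < a + b) (h2 : 0 < a) : E1 a b R T = 1 := by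
  rw [E1, if_pos ⟨h1, h2⟩]
lemma E1_case2 {a b R T : ℝ} (h : (a + b = 0 ∧ 0 < a) ∨ (a = 0 ∧ 0 < b)) :
    E1 a b R T = Real.log (T + 3 * R) := by
  rw [E1, if_neg, if_pos h]
  rcases h with ⟨h1, h2⟩ | ⟨h1, h2⟩ <;> rintro ⟨g1, g2⟩ <;> linarith
lemma E1_case3 {a b R T : ℝ} (h1 : a = 0) (h2 : b = 0) :
    E1 a b R T = Real.log (T + 3 * R) ^ 2 := by
  rw [E1, if_neg, if_neg, if_pos ⟨h1, h2⟩]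
  · rintro (⟨g1, g2⟩ | ⟨g1, g2⟩) <;> linarith
  · rintro ⟨g1, g2⟩; linarith
lemma E1_case4 {a b R T : ℝ} (h1 : a < 0) (h2 : 0 < b) :
    E1 a b R T = (T + 2 * R) ^ (-a) := by
  rw [E1, if_neg, if_neg, if_neg, if_pos ⟨h1, h2⟩]
  · rintro ⟨g1, g2⟩; linarith
  · rintro (⟨g1, g2⟩ | ⟨g1, g2⟩) <;> linarith
  · rintro ⟨g1, g2⟩; linarith
lemma E1_case5 {a b R T : ℝ} (h1 : a < 0) (h2 : b = 0) :
    E1 a b R T = (T + R) ^ (-a) * Real.log (T + 3 * R) := by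
  rw [E1, if_neg, if_neg, if_neg, if_neg, if_pos ⟨h1, h2⟩]
  · rintro ⟨g1, g2⟩; linarith
  · rintro ⟨g1, g2⟩; linarith
  · rintro (⟨g1, g2⟩ | ⟨g1, g2⟩) <;> linarith
  · rintro ⟨g1, g2⟩; linarith
lemma E1_case6 {a b R T : ℝ} (h1 : a + b < 0) (h2 : b < 0) :
    E1 a b R T = (T + 2 * R) ^ (-(a + b)) := by
  rw [E1, if_neg, if_neg, if_neg, if_neg, if_neg]
  · rintro ⟨g1, g2⟩; linarith
  · rintro ⟨g1, g2⟩; linarith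
  · rintro ⟨g1, g2⟩; linarith
  · rintro (⟨g1, g2⟩ | ⟨g1, g2⟩) <;> linarith
  · rintro ⟨g1, g2⟩; linarith

lemma log_le_rpow_div {x q : ℝ} (hx : 1 ≤ x) (hq : 0 < q) :
    Real.log x ≤ x ^ q / q := by
  have hx0 : 0 < x := by linarith
  have h1 : Real.log (x ^ q) = q * Real.log x := Real.log_rpow hx0 q
  have h2 : Real.log (x ^ q) ≤ x ^ q :=
    (Real.log_le_sub_one_of_pos (Real.rpow_pos_of_pos hx0 q)).trans (by linarith)
  rw [le_div_iff₀ hq]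
  nlinarith

lemma one_le_log {X : ℝ} (hX : 3 ≤ X) : 1 ≤ Real.log X := by
  have h1 : Real.exp 1 ≤ X := by
    have := Real.exp_one_lt_d9
    nlinarith
  calc (1:ℝ) = Real.log (Real.exp 1) := (Real.log_exp 1).symm
    _ ≤ Real.log X := Real.log_le_log (Real.exp_pos 1) h1

lemma hpsi_gen {a Φv d f cR e s : ℝ} (hd : 0 ≤ d) (hcR : 0 ≤ cR) (hs : 0 ≤ s)
    (hΦ : Φv ≤ d * (1+s) ^ f) (he1 : -(1+a)+f ≤ e) (he2 : -(1+a) ≤ e) :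
    (1+s) ^ (-(1+a)) * (Φv + cR) ≤ (d + cR) * (1+s) ^ e := by
  have hb1 : (1:ℝ) ≤ 1 + s := by linarith
  have hb0 : (0:ℝ) < 1 + s := by linarith
  have hP : (0:ℝ) ≤ (1+s) ^ (-(1+a)) := Real.rpow_nonneg hb0.le _
  calc (1+s) ^ (-(1+a)) * (Φv + cR)
      ≤ (1+s) ^ (-(1+a)) * (d * (1+s) ^ f + cR) := by
        apply mul_le_mul_of_nonneg_left (by linarith) hP
    _ = d * (1+s) ^ (-(1+a)+f) + cR * (1+s) ^ (-(1+a)) := by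
        rw [Real.rpow_add hb0]; ring
    _ ≤ d * (1+s) ^ e + cR * (1+s) ^ e := by
        have g1 := Real.rpow_le_rpow_of_exponent_le hb1 he1
        have g2 := Real.rpow_le_rpow_of_exponent_le hb1 he2
        have := mul_le_mul_of_nonneg_left g1 hd
        have := mul_le_mul_of_nonneg_left g2 hcR
        linarith
    _ = (d + cR) * (1+s) ^ e := by ring

lemma int_psi_pos {c q t : ℝ} (hc : 0 ≤ c) (hq : 0 < q) (ht : 0 ≤ t) :
    ∫ s in (0:ℝ)..t, c * (1+s) ^ (-(1+q)) ≤ c / q := by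
  rw [intervalIntegral.integral_const_mul]
  calc c * ∫ s in (0:ℝ)..t, (1+s) ^ (-(1+q)) ≤ c * (1/q) :=
      mul_le_mul_of_nonneg_left (int_bound_pos hq ht) hc
    _ = c / q := by ring

lemma int_psi_neg {c q t : ℝ} (hc : 0 ≤ c) (hq : q < 0) (ht : 0 ≤ t) :
    ∫ s in (0:ℝ)..t, c * (1+s) ^ (-(1+q)) ≤ c * ((1+t) ^ (-q) / (-q)) :=
  (intervalIntegral.integral_const_mul c _) ▸
    mul_le_mul_of_nonneg_left (int_bound_neg hq ht) hc

lemma int_psi_log {c t : ℝ} (ht : 0 ≤ t) :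
    ∫ s in (0:ℝ)..t, c * (1+s) ^ (-1:ℝ) = c * Real.log (1+t) := by
  rw [intervalIntegral.integral_const_mul, int_inv_eval ht]

/-- The conclusion of the a priori estimate, as a `Prop`. -/
def Concl (p a b R : ℝ) : Prop :=
  ∃ C₁ > 0, ∀ T : ℝ, 0 < T → ∀ u : ℝ → ℝ → ℝ,
    ContinuousOn (fun q : ℝ × ℝ => u q.1 q.2) (Set.univ ×ˢ Set.Icc 0 T) →
    (∀ x t : ℝ, 0 ≤ t → t ≤ T → t + R < |x| → u x t = 0) →
    ∀ M : ℝ, 0 ≤ M → (∀ x t : ℝ, 0 ≤ t → t ≤ T → |u x t| ≤ M) →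
    ∀ x t : ℝ, 0 ≤ t → t ≤ T →
      |duhamel a b (fun y s => |u y s| ^ p) x t| ≤ C₁ * M ^ p * E1 a b R T

lemma branch1a {p a b R : ℝ} (hp : 1 < p) (hR : 1 < R) (ha : 0 < a) (hb : 0 < b) :
    Concl p a b R := by
  have hp0 : 0 < p := by linarith
  have hK : 0 < (2+R) ^ |1+a| * 3 ^ |1+b| :=
    mul_pos (Real.rpow_pos_of_pos (by linarith) _) (Real.rpow_pos_of_pos (by norm_num) _)
  obtain ⟨cR, hcRdef⟩ : ∃ c : ℝ, c = ∫ z in (0:ℝ)..R, (1+z) ^ (-(1+b)) := ⟨_, rfl⟩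
  have hcR : 0 ≤ cR := hcRdef ▸ int_nonneg (by linarith)
  have hc0 : 0 < 1/b + cR := by
    have : 0 < 1/b := by positivity
    linarith
  refine ⟨(2+R) ^ |1+a| * 3 ^ |1+b| * ((1/b + cR)/a),
    mul_pos hK (div_pos hc0 ha), ?_⟩
  intro T hT u hu hsupp M hM hMb x t ht0 htT
  have hMp : (0:ℝ) ≤ M ^ p := Real.rpow_nonneg hM _
  have hkey := key p a b R T hp0 hR u hsupp M hM hMb x t ht0 htT
    (fun s => (1/b + cR) * (1+s) ^ (-(1+a)))
    (continuousOn_const.mul (cont_aux2 _))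
    (fun s hs => mul_nonneg hc0.le (Real.rpow_nonneg (by linarith [hs.1]) _))
    (fun s hs => by
      rw [← hcRdef]
      have hΦ : (∫ z in (0:ℝ)..s, (1+z) ^ (-(1+b))) ≤ (1/b) * (1+s) ^ (0:ℝ) := by
        rw [Real.rpow_zero, mul_one]
        exact int_bound_pos hb hs.1
      exact hpsi_gen (by positivity) hcR hs.1 hΦ (by linarith) (by linarith))
  have hint := int_psi_pos (c := 1/b + cR) (q := a) hc0.le ha ht0
  have hE : E1 a b R T = 1 := E1_case1 (by linarith) ha
  calc |duhamel a b (fun y s => |u y s| ^ p) x t|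
      ≤ ((2+R) ^ |1+a| * 3 ^ |1+b|) * M ^ p *
        ∫ s in (0:ℝ)..t, (1/b + cR) * (1+s) ^ (-(1+a)) := hkey
    _ ≤ ((2+R) ^ |1+a| * 3 ^ |1+b|) * M ^ p * ((1/b + cR)/a) :=
        mul_le_mul_of_nonneg_left hint (by positivity)
    _ = (2+R) ^ |1+a| * 3 ^ |1+b| * ((1/b + cR)/a) * M ^ p * E1 a b R T := by
        rw [hE]; ring

lemma branch1b {p a R : ℝ} (hp : 1 < p) (hR : 1 < R) (ha : 0 < a) :
    Concl p a 0 R := by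
  have hp0 : 0 < p := by linarith
  have hK : 0 < (2+R) ^ |1+a| * 3 ^ |1+(0:ℝ)| :=
    mul_pos (Real.rpow_pos_of_pos (by linarith) _) (Real.rpow_pos_of_pos (by norm_num) _)
  obtain ⟨cR, hcRdef⟩ : ∃ c : ℝ, c = ∫ z in (0:ℝ)..R, (1+z) ^ (-(1+(0:ℝ))) := ⟨_, rfl⟩
  have hcR : 0 ≤ cR := hcRdef ▸ int_nonneg (by linarith)
  have hc0 : 0 < 2/a + cR := by
    have : 0 < 2/a := by positivity
    linarith
  refine ⟨(2+R) ^ |1+a| * 3 ^ |1+(0:ℝ)| * ((2/a + cR)/(a/2)),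
    mul_pos hK (div_pos hc0 (by positivity)), ?_⟩
  intro T hT u hu hsupp M hM hMb x t ht0 htT
  have hMp : (0:ℝ) ≤ M ^ p := Real.rpow_nonneg hM _
  have hkey := key p a 0 R T hp0 hR u hsupp M hM hMb x t ht0 htT
    (fun s => (2/a + cR) * (1+s) ^ (-(1+a/2)))
    (continuousOn_const.mul (cont_aux2 _))
    (fun s hs => mul_nonneg hc0.le (Real.rpow_nonneg (by linarith [hs.1]) _))
    (fun s hs => by
      rw [← hcRdef]
      have h0 : (∫ z in (0:ℝ)..s, (1+z) ^ (-(1+(0:ℝ)))) = Real.log (1+s) := by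
        rw [show -(1+(0:ℝ)) = (-1:ℝ) by norm_num]
        exact int_inv_eval hs.1
      rw [h0]
      have hΦ : Real.log (1+s) ≤ (2/a) * (1+s) ^ (a/2) := by
        refine (Real.log_le_rpow_div (ε := a/2) (by linarith [hs.1]) (by positivity)).trans_eq ?_
        ring
      exact hpsi_gen (by positivity) hcR hs.1 hΦ (by linarith) (by linarith))
  have hint := int_psi_pos (c := 2/a + cR) (q := a/2) hc0.le (by positivity) ht0
  have hE : E1 a 0 R T = 1 := E1_case1 (by linarith) ha
  calc |duhamel a 0 (fun y s => |u y s| ^ p) x t|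
      ≤ ((2+R) ^ |1+a| * 3 ^ |1+(0:ℝ)|) * M ^ p *
        ∫ s in (0:ℝ)..t, (2/a + cR) * (1+s) ^ (-(1+a/2)) := hkey
    _ ≤ ((2+R) ^ |1+a| * 3 ^ |1+(0:ℝ)|) * M ^ p * ((2/a + cR)/(a/2)) :=
        mul_le_mul_of_nonneg_left hint (by positivity)
    _ = (2+R) ^ |1+a| * 3 ^ |1+(0:ℝ)| * ((2/a + cR)/(a/2)) * M ^ p * E1 a 0 R T := by
        rw [hE]; ring

lemma branch1c {p a b R : ℝ} (hp : 1 < p) (hR : 1 < R) (ha : 0 < a) (hb : b < 0)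
    (hab : 0 < a + b) : Concl p a b R := by
  have hp0 : 0 < p := by linarith
  have hK : 0 < (2+R) ^ |1+a| * 3 ^ |1+b| :=
    mul_pos (Real.rpow_pos_of_pos (by linarith) _) (Real.rpow_pos_of_pos (by norm_num) _)
  obtain ⟨cR, hcRdef⟩ : ∃ c : ℝ, c = ∫ z in (0:ℝ)..R, (1+z) ^ (-(1+b)) := ⟨_, rfl⟩
  have hcR : 0 ≤ cR := hcRdef ▸ int_nonneg (by linarith)
  have hnb : (0:ℝ) < -b := by linarith
  have hc0 : 0 < 1/(-b) + cR := by
    have : 0 < 1/(-b) := one_div_pos.mpr hnb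
    linarith
  refine ⟨(2+R) ^ |1+a| * 3 ^ |1+b| * ((1/(-b) + cR)/(a+b)),
    mul_pos hK (div_pos hc0 hab), ?_⟩
  intro T hT u hu hsupp M hM hMb x t ht0 htT
  have hMp : (0:ℝ) ≤ M ^ p := Real.rpow_nonneg hM _
  have hkey := key p a b R T hp0 hR u hsupp M hM hMb x t ht0 htT
    (fun s => (1/(-b) + cR) * (1+s) ^ (-(1+(a+b))))
    (continuousOn_const.mul (cont_aux2 _))
    (fun s hs => mul_nonneg hc0.le (Real.rpow_nonneg (by linarith [hs.1]) _))
    (fun s hs => by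
      rw [← hcRdef]
      have hΦ : (∫ z in (0:ℝ)..s, (1+z) ^ (-(1+b))) ≤ (1/(-b)) * (1+s) ^ (-b) :=
        (int_bound_neg hb hs.1).trans_eq (by ring)
      exact hpsi_gen (le_of_lt (one_div_pos.mpr hnb)) hcR hs.1 hΦ (by linarith) (by linarith))
  have hint := int_psi_pos (c := 1/(-b) + cR) (q := a+b) hc0.le hab ht0
  have hE : E1 a b R T = 1 := E1_case1 hab ha
  calc |duhamel a b (fun y s => |u y s| ^ p) x t|
      ≤ ((2+R) ^ |1+a| * 3 ^ |1+b|) * M ^ p *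
        ∫ s in (0:ℝ)..t, (1/(-b) + cR) * (1+s) ^ (-(1+(a+b))) := hkey
    _ ≤ ((2+R) ^ |1+a| * 3 ^ |1+b|) * M ^ p * ((1/(-b) + cR)/(a+b)) :=
        mul_le_mul_of_nonneg_left hint (by positivity)
    _ = (2+R) ^ |1+a| * 3 ^ |1+b| * ((1/(-b) + cR)/(a+b)) * M ^ p * E1 a b R T := by
        rw [hE]; ring

lemma branch2a {p a R : ℝ} (hp : 1 < p) (hR : 1 < R) (ha : 0 < a) :
    Concl p a (-a) R := by
  have hp0 : 0 < p := by linarith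
  have hK : 0 < (2+R) ^ |1+a| * 3 ^ |1+(-a)| :=
    mul_pos (Real.rpow_pos_of_pos (by linarith) _) (Real.rpow_pos_of_pos (by norm_num) _)
  obtain ⟨cR, hcRdef⟩ : ∃ c : ℝ, c = ∫ z in (0:ℝ)..R, (1+z) ^ (-(1+(-a))) := ⟨_, rfl⟩
  have hcR : 0 ≤ cR := hcRdef ▸ int_nonneg (by linarith)
  have hc0 : 0 < 1/a + cR := by
    have : 0 < 1/a := by positivity
    linarith
  refine ⟨(2+R) ^ |1+a| * 3 ^ |1+(-a)| * (1/a + cR), mul_pos hK hc0, ?_⟩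
  intro T hT u hu hsupp M hM hMb x t ht0 htT
  have hMp : (0:ℝ) ≤ M ^ p := Real.rpow_nonneg hM _
  have hkey := key p a (-a) R T hp0 hR u hsupp M hM hMb x t ht0 htT
    (fun s => (1/a + cR) * (1+s) ^ (-1:ℝ))
    (continuousOn_const.mul (cont_aux2 _))
    (fun s hs => mul_nonneg hc0.le (Real.rpow_nonneg (by linarith [hs.1]) _))
    (fun s hs => by
      rw [← hcRdef]
      have hΦ : (∫ z in (0:ℝ)..s, (1+z) ^ (-(1+(-a)))) ≤ (1/a) * (1+s) ^ a := by
        have h := int_bound_neg (q := -a) (by linarith) hs.1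
        rw [neg_neg] at h
        exact h.trans_eq (by ring)
      exact hpsi_gen (by positivity) hcR hs.1 hΦ (by linarith) (by linarith))
  have hlt : Real.log (1+t) ≤ Real.log (T + 3*R) :=
    Real.log_le_log (by linarith) (by linarith)
  have hint : ∫ s in (0:ℝ)..t, (1/a + cR) * (1+s) ^ (-1:ℝ) ≤
      (1/a + cR) * Real.log (T + 3*R) := by
    rw [int_psi_log ht0]
    exact mul_le_mul_of_nonneg_left hlt hc0.le
  have hE : E1 a (-a) R T = Real.log (T + 3*R) := E1_case2 (Or.inl ⟨by ring, ha⟩)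
  calc |duhamel a (-a) (fun y s => |u y s| ^ p) x t|
      ≤ ((2+R) ^ |1+a| * 3 ^ |1+(-a)|) * M ^ p *
        ∫ s in (0:ℝ)..t, (1/a + cR) * (1+s) ^ (-1:ℝ) := hkey
    _ ≤ ((2+R) ^ |1+a| * 3 ^ |1+(-a)|) * M ^ p * ((1/a + cR) * Real.log (T + 3*R)) :=
        mul_le_mul_of_nonneg_left hint (by positivity)
    _ = (2+R) ^ |1+a| * 3 ^ |1+(-a)| * (1/a + cR) * M ^ p * E1 a (-a) R T := by
        rw [hE]; ring

lemma branch2b {p b R : ℝ} (hp : 1 < p) (hR : 1 < R) (hb : 0 < b) :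
    Concl p 0 b R := by
  have hp0 : 0 < p := by linarith
  have hK : 0 < (2+R) ^ |1+(0:ℝ)| * 3 ^ |1+b| :=
    mul_pos (Real.rpow_pos_of_pos (by linarith) _) (Real.rpow_pos_of_pos (by norm_num) _)
  obtain ⟨cR, hcRdef⟩ : ∃ c : ℝ, c = ∫ z in (0:ℝ)..R, (1+z) ^ (-(1+b)) := ⟨_, rfl⟩
  have hcR : 0 ≤ cR := hcRdef ▸ int_nonneg (by linarith)
  have hc0 : 0 < 1/b + cR := by
    have : 0 < 1/b := by positivity
    linarith
  refine ⟨(2+R) ^ |1+(0:ℝ)| * 3 ^ |1+b| * (1/b + cR), mul_pos hK hc0, ?_⟩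
  intro T hT u hu hsupp M hM hMb x t ht0 htT
  have hMp : (0:ℝ) ≤ M ^ p := Real.rpow_nonneg hM _
  have hkey := key p 0 b R T hp0 hR u hsupp M hM hMb x t ht0 htT
    (fun s => (1/b + cR) * (1+s) ^ (-1:ℝ))
    (continuousOn_const.mul (cont_aux2 _))
    (fun s hs => mul_nonneg hc0.le (Real.rpow_nonneg (by linarith [hs.1]) _))
    (fun s hs => by
      rw [← hcRdef]
      have hΦ : (∫ z in (0:ℝ)..s, (1+z) ^ (-(1+b))) ≤ (1/b) * (1+s) ^ (0:ℝ) := by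
        rw [Real.rpow_zero, mul_one]
        exact int_bound_pos hb hs.1
      exact hpsi_gen (by positivity) hcR hs.1 hΦ (by norm_num) (by norm_num))
  have hlt : Real.log (1+t) ≤ Real.log (T + 3*R) :=
    Real.log_le_log (by linarith) (by linarith)
  have hint : ∫ s in (0:ℝ)..t, (1/b + cR) * (1+s) ^ (-1:ℝ) ≤
      (1/b + cR) * Real.log (T + 3*R) := by
    rw [int_psi_log ht0]
    exact mul_le_mul_of_nonneg_left hlt hc0.le
  have hE : E1 0 b R T = Real.log (T + 3*R) := E1_case2 (Or.inr ⟨rfl, hb⟩)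
  calc |duhamel 0 b (fun y s => |u y s| ^ p) x t|
      ≤ ((2+R) ^ |1+(0:ℝ)| * 3 ^ |1+b|) * M ^ p *
        ∫ s in (0:ℝ)..t, (1/b + cR) * (1+s) ^ (-1:ℝ) := hkey
    _ ≤ ((2+R) ^ |1+(0:ℝ)| * 3 ^ |1+b|) * M ^ p * ((1/b + cR) * Real.log (T + 3*R)) :=
        mul_le_mul_of_nonneg_left hint (by positivity)
    _ = (2+R) ^ |1+(0:ℝ)| * 3 ^ |1+b| * (1/b + cR) * M ^ p * E1 0 b R T := by
        rw [hE]; ring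

lemma branch3 {p R : ℝ} (hp : 1 < p) (hR : 1 < R) :
    Concl p 0 0 R := by
  have hp0 : 0 < p := by linarith
  have hK : 0 < (2+R) ^ |1+(0:ℝ)| * 3 ^ |1+(0:ℝ)| :=
    mul_pos (Real.rpow_pos_of_pos (by linarith) _) (Real.rpow_pos_of_pos (by norm_num) _)
  obtain ⟨cR, hcRdef⟩ : ∃ c : ℝ, c = ∫ z in (0:ℝ)..R, (1+z) ^ (-(1+(0:ℝ))) := ⟨_, rfl⟩
  have hcR : 0 ≤ cR := hcRdef ▸ int_nonneg (by linarith)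
  refine ⟨(2+R) ^ |1+(0:ℝ)| * 3 ^ |1+(0:ℝ)| * (1 + cR),
    mul_pos hK (by linarith), ?_⟩
  intro T hT u hu hsupp M hM hMb x t ht0 htT
  have hMp : (0:ℝ) ≤ M ^ p := Real.rpow_nonneg hM _
  have hlog0 : 0 ≤ Real.log (1+t) := Real.log_nonneg (by linarith)
  have hc0 : 0 ≤ Real.log (1+t) + cR := by linarith
  have hkey := key p 0 0 R T hp0 hR u hsupp M hM hMb x t ht0 htT
    (fun s => (Real.log (1+t) + cR) * (1+s) ^ (-1:ℝ))
    (continuousOn_const.mul (cont_aux2 _))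
    (fun s hs => mul_nonneg hc0 (Real.rpow_nonneg (by linarith [hs.1]) _))
    (fun s hs => by
      rw [← hcRdef]
      have h0 : (∫ z in (0:ℝ)..s, (1+z) ^ (-(1+(0:ℝ)))) = Real.log (1+s) := by
        rw [show -(1+(0:ℝ)) = (-1:ℝ) by norm_num]
        exact int_inv_eval hs.1
      rw [h0]
      have hΦ : Real.log (1+s) ≤ Real.log (1+t) * (1+s) ^ (0:ℝ) := by
        rw [Real.rpow_zero, mul_one]
        exact Real.log_le_log (by linarith [hs.1]) (by linarith [hs.2])
      exact hpsi_gen hlog0 hcR hs.1 hΦ (by norm_num) (by norm_num))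
  have hlt : Real.log (1+t) ≤ Real.log (T + 3*R) :=
    Real.log_le_log (by linarith) (by linarith)
  have hl1 : 1 ≤ Real.log (T + 3*R) := one_le_log (by linarith)
  have hint : ∫ s in (0:ℝ)..t, (Real.log (1+t) + cR) * (1+s) ^ (-1:ℝ) ≤
      ((1 + cR) * Real.log (T + 3*R)) * Real.log (T + 3*R) := by
    rw [int_psi_log ht0]
    have h1 : Real.log (1+t) + cR ≤ (1 + cR) * Real.log (T + 3*R) := by
      nlinarith [mul_le_mul_of_nonneg_left hl1 hcR]
    exact mul_le_mul h1 hlt hlog0 (mul_nonneg (by linarith) (by linarith))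
  have hE : E1 0 0 R T = Real.log (T + 3*R) ^ 2 := E1_case3 rfl rfl
  calc |duhamel 0 0 (fun y s => |u y s| ^ p) x t|
      ≤ ((2+R) ^ |1+(0:ℝ)| * 3 ^ |1+(0:ℝ)|) * M ^ p *
        ∫ s in (0:ℝ)..t, (Real.log (1+t) + cR) * (1+s) ^ (-1:ℝ) := hkey
    _ ≤ ((2+R) ^ |1+(0:ℝ)| * 3 ^ |1+(0:ℝ)|) * M ^ p *
        (((1 + cR) * Real.log (T + 3*R)) * Real.log (T + 3*R)) :=
        mul_le_mul_of_nonneg_left hint (by positivity)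
    _ = (2+R) ^ |1+(0:ℝ)| * 3 ^ |1+(0:ℝ)| * (1 + cR) * M ^ p * E1 0 0 R T := by
        rw [hE]; ring

lemma branch4 {p a b R : ℝ} (hp : 1 < p) (hR : 1 < R) (ha : a < 0) (hb : 0 < b) :
    Concl p a b R := by
  have hp0 : 0 < p := by linarith
  have hna : (0:ℝ) < -a := by linarith
  have hK : 0 < (2+R) ^ |1+a| * 3 ^ |1+b| :=
    mul_pos (Real.rpow_pos_of_pos (by linarith) _) (Real.rpow_pos_of_pos (by norm_num) _)
  obtain ⟨cR, hcRdef⟩ : ∃ c : ℝ, c = ∫ z in (0:ℝ)..R, (1+z) ^ (-(1+b)) := ⟨_, rfl⟩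
  have hcR : 0 ≤ cR := hcRdef ▸ int_nonneg (by linarith)
  have hc0 : 0 < 1/b + cR := by
    have : 0 < 1/b := by positivity
    linarith
  refine ⟨(2+R) ^ |1+a| * 3 ^ |1+b| * ((1/b + cR)/(-a)),
    mul_pos hK (div_pos hc0 hna), ?_⟩
  intro T hT u hu hsupp M hM hMb x t ht0 htT
  have hMp : (0:ℝ) ≤ M ^ p := Real.rpow_nonneg hM _
  have hkey := key p a b R T hp0 hR u hsupp M hM hMb x t ht0 htT
    (fun s => (1/b + cR) * (1+s) ^ (-(1+a)))
    (continuousOn_const.mul (cont_aux2 _))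
    (fun s hs => mul_nonneg hc0.le (Real.rpow_nonneg (by linarith [hs.1]) _))
    (fun s hs => by
      rw [← hcRdef]
      have hΦ : (∫ z in (0:ℝ)..s, (1+z) ^ (-(1+b))) ≤ (1/b) * (1+s) ^ (0:ℝ) := by
        rw [Real.rpow_zero, mul_one]
        exact int_bound_pos hb hs.1
      exact hpsi_gen (by positivity) hcR hs.1 hΦ (by linarith) (by linarith))
  have hbase : (1+t) ^ (-a) ≤ (T + 2*R) ^ (-a) :=
    Real.rpow_le_rpow (by linarith) (by linarith) hna.le
  have hint : ∫ s in (0:ℝ)..t, (1/b + cR) * (1+s) ^ (-(1+a)) ≤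
      (1/b + cR) * ((T + 2*R) ^ (-a) / (-a)) := by
    refine (int_psi_neg hc0.le ha ht0).trans ?_
    gcongr
  have hE : E1 a b R T = (T + 2*R) ^ (-a) := E1_case4 ha hb
  calc |duhamel a b (fun y s => |u y s| ^ p) x t|
      ≤ ((2+R) ^ |1+a| * 3 ^ |1+b|) * M ^ p *
        ∫ s in (0:ℝ)..t, (1/b + cR) * (1+s) ^ (-(1+a)) := hkey
    _ ≤ ((2+R) ^ |1+a| * 3 ^ |1+b|) * M ^ p * ((1/b + cR) * ((T + 2*R) ^ (-a) / (-a))) :=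
        mul_le_mul_of_nonneg_left hint (by positivity)
    _ = (2+R) ^ |1+a| * 3 ^ |1+b| * ((1/b + cR)/(-a)) * M ^ p * E1 a b R T := by
        rw [hE]; ring

lemma branch5 {p a R : ℝ} (hp : 1 < p) (hR : 1 < R) (ha : a < 0) :
    Concl p a 0 R := by
  have hp0 : 0 < p := by linarith
  have hna : (0:ℝ) < -a := by linarith
  have hK : 0 < (2+R) ^ |1+a| * 3 ^ |1+(0:ℝ)| :=
    mul_pos (Real.rpow_pos_of_pos (by linarith) _) (Real.rpow_pos_of_pos (by norm_num) _)
  obtain ⟨cR, hcRdef⟩ : ∃ c : ℝ, c = ∫ z in (0:ℝ)..R, (1+z) ^ (-(1+(0:ℝ))) := ⟨_, rfl⟩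
  have hcR : 0 ≤ cR := hcRdef ▸ int_nonneg (by linarith)
  refine ⟨(2+R) ^ |1+a| * 3 ^ |1+(0:ℝ)| * ((1 + cR)/(-a)),
    mul_pos hK (div_pos (by linarith) hna), ?_⟩
  intro T hT u hu hsupp M hM hMb x t ht0 htT
  have hMp : (0:ℝ) ≤ M ^ p := Real.rpow_nonneg hM _
  have hlog0 : 0 ≤ Real.log (1+t) := Real.log_nonneg (by linarith)
  have hc0 : 0 ≤ Real.log (1+t) + cR := by linarith
  have hkey := key p a 0 R T hp0 hR u hsupp M hM hMb x t ht0 htT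
    (fun s => (Real.log (1+t) + cR) * (1+s) ^ (-(1+a)))
    (continuousOn_const.mul (cont_aux2 _))
    (fun s hs => mul_nonneg hc0 (Real.rpow_nonneg (by linarith [hs.1]) _))
    (fun s hs => by
      rw [← hcRdef]
      have h0 : (∫ z in (0:ℝ)..s, (1+z) ^ (-(1+(0:ℝ)))) = Real.log (1+s) := by
        rw [show -(1+(0:ℝ)) = (-1:ℝ) by norm_num]
        exact int_inv_eval hs.1
      rw [h0]
      have hΦ : Real.log (1+s) ≤ Real.log (1+t) * (1+s) ^ (0:ℝ) := by
        rw [Real.rpow_zero, mul_one]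
        exact Real.log_le_log (by linarith [hs.1]) (by linarith [hs.2])
      exact hpsi_gen hlog0 hcR hs.1 hΦ (by linarith) (by linarith))
  have hlt : Real.log (1+t) ≤ Real.log (T + 3*R) :=
    Real.log_le_log (by linarith) (by linarith)
  have hl1 : 1 ≤ Real.log (T + 3*R) := one_le_log (by linarith)
  have hbase : (1+t) ^ (-a) ≤ (T + R) ^ (-a) :=
    Real.rpow_le_rpow (by linarith) (by linarith) hna.le
  have hint : ∫ s in (0:ℝ)..t, (Real.log (1+t) + cR) * (1+s) ^ (-(1+a)) ≤
      ((1 + cR) * Real.log (T + 3*R)) * ((T + R) ^ (-a) / (-a)) := by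
    refine (int_psi_neg hc0 ha ht0).trans ?_
    have h1 : Real.log (1+t) + cR ≤ (1 + cR) * Real.log (T + 3*R) := by
      nlinarith [mul_le_mul_of_nonneg_left hl1 hcR]
    have h2 : (1+t) ^ (-a) / (-a) ≤ (T + R) ^ (-a) / (-a) := by gcongr
    exact mul_le_mul h1 h2
      (div_nonneg (Real.rpow_nonneg (by linarith) _) hna.le)
      (mul_nonneg (by linarith) (by linarith))
  have hE : E1 a 0 R T = (T + R) ^ (-a) * Real.log (T + 3*R) := E1_case5 ha rfl
  calc |duhamel a 0 (fun y s => |u y s| ^ p) x t|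
      ≤ ((2+R) ^ |1+a| * 3 ^ |1+(0:ℝ)|) * M ^ p *
        ∫ s in (0:ℝ)..t, (Real.log (1+t) + cR) * (1+s) ^ (-(1+a)) := hkey
    _ ≤ ((2+R) ^ |1+a| * 3 ^ |1+(0:ℝ)|) * M ^ p *
        (((1 + cR) * Real.log (T + 3*R)) * ((T + R) ^ (-a) / (-a))) :=
        mul_le_mul_of_nonneg_left hint (by positivity)
    _ = (2+R) ^ |1+a| * 3 ^ |1+(0:ℝ)| * ((1 + cR)/(-a)) * M ^ p * E1 a 0 R T := by
        rw [hE]; ring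

lemma branch6 {p a b R : ℝ} (hp : 1 < p) (hR : 1 < R) (hb : b < 0) (hab : a + b < 0) :
    Concl p a b R := by
  have hp0 : 0 < p := by linarith
  have hnab : (0:ℝ) < -(a+b) := by linarith
  have hK : 0 < (2+R) ^ |1+a| * 3 ^ |1+b| :=
    mul_pos (Real.rpow_pos_of_pos (by linarith) _) (Real.rpow_pos_of_pos (by norm_num) _)
  obtain ⟨cR, hcRdef⟩ : ∃ c : ℝ, c = ∫ z in (0:ℝ)..R, (1+z) ^ (-(1+b)) := ⟨_, rfl⟩
  have hcR : 0 ≤ cR := hcRdef ▸ int_nonneg (by linarith)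
  have hnb : (0:ℝ) < -b := by linarith
  have hc0 : 0 < 1/(-b) + cR := by
    have : 0 < 1/(-b) := one_div_pos.mpr hnb
    linarith
  refine ⟨(2+R) ^ |1+a| * 3 ^ |1+b| * ((1/(-b) + cR)/(-(a+b))),
    mul_pos hK (div_pos hc0 hnab), ?_⟩
  intro T hT u hu hsupp M hM hMb x t ht0 htT
  have hMp : (0:ℝ) ≤ M ^ p := Real.rpow_nonneg hM _
  have hkey := key p a b R T hp0 hR u hsupp M hM hMb x t ht0 htT
    (fun s => (1/(-b) + cR) * (1+s) ^ (-(1+(a+b))))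
    (continuousOn_const.mul (cont_aux2 _))
    (fun s hs => mul_nonneg hc0.le (Real.rpow_nonneg (by linarith [hs.1]) _))
    (fun s hs => by
      rw [← hcRdef]
      have hΦ : (∫ z in (0:ℝ)..s, (1+z) ^ (-(1+b))) ≤ (1/(-b)) * (1+s) ^ (-b) :=
        (int_bound_neg hb hs.1).trans_eq (by ring)
      exact hpsi_gen (le_of_lt (one_div_pos.mpr hnb)) hcR hs.1 hΦ (by linarith) (by linarith))
  have hbase : (1+t) ^ (-(a+b)) ≤ (T + 2*R) ^ (-(a+b)) :=
    Real.rpow_le_rpow (by linarith) (by linarith) hnab.le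
  have hint : ∫ s in (0:ℝ)..t, (1/(-b) + cR) * (1+s) ^ (-(1+(a+b))) ≤
      (1/(-b) + cR) * ((T + 2*R) ^ (-(a+b)) / (-(a+b))) := by
    refine (int_psi_neg hc0.le hab ht0).trans ?_
    gcongr
  have hE : E1 a b R T = (T + 2*R) ^ (-(a+b)) := E1_case6 hab hb
  calc |duhamel a b (fun y s => |u y s| ^ p) x t|
      ≤ ((2+R) ^ |1+a| * 3 ^ |1+b|) * M ^ p *
        ∫ s in (0:ℝ)..t, (1/(-b) + cR) * (1+s) ^ (-(1+(a+b))) := hkey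
    _ ≤ ((2+R) ^ |1+a| * 3 ^ |1+b|) * M ^ p *
        ((1/(-b) + cR) * ((T + 2*R) ^ (-(a+b)) / (-(a+b)))) :=
        mul_le_mul_of_nonneg_left hint (by positivity)
    _ = (2+R) ^ |1+a| * 3 ^ |1+b| * ((1/(-b) + cR)/(-(a+b))) * M ^ p * E1 a b R T := by
        rw [hE]; ring

/-- Lemma 3.1 (a priori estimate for the sup norm): `‖L(|u|^p)‖₁ ≤ C₁ ‖u‖₁^p E₁(T)`,
formulated via an arbitrary bound `M` for `‖u‖₁ = sup_{ℝ×[0,T]} |u|`. -/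
theorem apriori_estimate_E1 (p a b R : ℝ)
    (hp : 1 < p) (hR : 1 < R)
    (hab : (0 < a + b ∧ 0 < a) ∨ (a + b = 0 ∧ 0 < a) ∨ (a = 0 ∧ 0 ≤ b) ∨
      a < 0 ∨ (a + b < 0 ∧ b < 0)) :
    ∃ C₁ > 0, ∀ T : ℝ, 0 < T → ∀ u : ℝ → ℝ → ℝ,
      ContinuousOn (fun q : ℝ × ℝ => u q.1 q.2) (Set.univ ×ˢ Set.Icc 0 T) →
      (∀ x t : ℝ, 0 ≤ t → t ≤ T → t + R < |x| → u x t = 0) →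
      ∀ M : ℝ, 0 ≤ M → (∀ x t : ℝ, 0 ≤ t → t ≤ T → |u x t| ≤ M) →
      ∀ x t : ℝ, 0 ≤ t → t ≤ T →
        |duhamel a b (fun y s => |u y s| ^ p) x t| ≤ C₁ * M ^ p * E1 a b R T := by
  rcases hab with ⟨h1, h2⟩ | ⟨h1, h2⟩ | ⟨h1, h2⟩ | h1 | ⟨h1, h2⟩
  · rcases lt_trichotomy b 0 with hb | hb | hb
    · exact branch1c hp hR h2 hb h1
    · subst hb; exact branch1b hp hR h2
    · exact branch1a hp hR h2 hb
  · have hb : b = -a := by linarith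
    subst hb
    exact branch2a hp hR h2
  · subst h1
    rcases h2.eq_or_lt with hb | hb
    · subst hb
      exact branch3 hp hR
    · exact branch2b hp hR hb
  · rcases lt_trichotomy b 0 with hb | hb | hb
    · exact branch6 hp hR hb (by linarith)
    · subst hb; exact branch5 hp hR h1
    · exact branch4 hp hR h1 hb
  · exact branch6 hp hR h2 h1

end
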